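/- Let η > 0 be a real number, let λ₀ : ℝ → ℝ be a continuous function, and let Λ₀(t) = ∫₀ᵗ λ₀(v) dv. For each natural number i define P_i(t) = ((∏_{k=0}^{i−1}(η⁻¹ + k))/i!) · (1 − exp(−ηΛ₀(t)))^i · (exp(−ηΛ₀(t)))^{η⁻¹}, and define the state-dependent shock intensities λ_i(t) = (1 + ηi)·λ₀(t). Then the functions P_i solve the pure-birth (Kolmogorov forward) equations of the facilitation shock model: P₀(0) = 1, P_i(0) = 0 for i ≥ 1, the derivative of P₀ at every t satisfies P₀′(t) = −λ₀(t)·P₀(t), and for every i ≥ 1 and every t, P_i′(t) = λ_{i−1}(t)·P_{i−1}(t) − λ_i(t)·P_i(t). -/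

import Mathlib

open Real Finset

/-!
In the operational time `x = Λ₀ t` one has `exp (-η x) ^ η⁻¹ = exp (-x)`, so `P i = p i ∘ Λ₀` with
`p i x = c i * (1 - exp (-η x)) ^ i * exp (-x)`, and by the chain rule the forward equations
reduce to `p (j + 1)' = (1 + η j) p j - (1 + η (j + 1)) p (j + 1)`. Differentiating, this is
exactly the recursion `η (j + 1) c (j + 1) = (1 + η j) c j` of the generalized binomial
coefficients `c i = (η⁻¹ + i - 1 choose i)`.
-/

noncomputable def facilitationCoeff (η : ℝ) (i : ℕ) : ℝ :=
  (∏ k ∈ range i, (η⁻¹ + (k : ℝ))) / (i.factorial : ℝ)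

@[simp]
lemma facilitationCoeff_zero (η : ℝ) : facilitationCoeff η 0 = 1 := by
  simp [facilitationCoeff]

lemma mul_facilitationCoeff_succ {η : ℝ} (hη : η ≠ 0) (i : ℕ) :
    η * (i + 1) * facilitationCoeff η (i + 1) = (1 + η * i) * facilitationCoeff η i := by
  simp only [facilitationCoeff, prod_range_succ, Nat.factorial_succ, Nat.cast_mul]
  field_simp
  push_cast
  ring

noncomputable def facilitationProb (η : ℝ) (i : ℕ) (x : ℝ) : ℝ :=
  facilitationCoeff η i * (1 - exp (-(η * x))) ^ i * exp (-x)

lemma facilitationProb_zero (η : ℝ) : facilitationProb η 0 = fun x => exp (-x) := by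
  ext x; simp [facilitationProb]

lemma facilitationProb_apply_zero (η : ℝ) {i : ℕ} (hi : i ≠ 0) : facilitationProb η i 0 = 0 := by
  simp [facilitationProb, hi]

lemma hasDerivAt_facilitationProb_zero (η x : ℝ) :
    HasDerivAt (facilitationProb η 0) (-facilitationProb η 0 x) x := by
  rw [facilitationProb_zero]
  simpa using (hasDerivAt_neg x).exp

lemma hasDerivAt_facilitationProb_succ {η : ℝ} (hη : η ≠ 0) (j : ℕ) (x : ℝ) :
    HasDerivAt (facilitationProb η (j + 1))
      ((1 + η * j) * facilitationProb η j x
        - (1 + η * (j + 1)) * facilitationProb η (j + 1) x) x := by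
  have hq : HasDerivAt (fun y => 1 - exp (-(η * y))) (exp (-(η * x)) * η) x := by
    simpa using (((hasDerivAt_id x).const_mul η).neg.exp).const_sub 1
  have h : HasDerivAt
      (fun y => facilitationCoeff η (j + 1) * ((1 - exp (-(η * y))) ^ (j + 1) * exp (-y))) _ x :=
    ((hq.pow (j + 1)).mul (hasDerivAt_neg x).exp).const_mul _
  convert h using 1
  · ext y
    simp only [facilitationProb]
    ring
  · simp only [facilitationProb, Pi.pow_apply, Nat.add_sub_cancel]
    push_cast
    linear_combination -(1 - exp (-(η * x))) ^ j * exp (-x) * mul_facilitationCoeff_succ hη j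

lemma exp_neg_mul_rpow_inv {η : ℝ} (hη : η ≠ 0) (x : ℝ) : exp (-(η * x)) ^ η⁻¹ = exp (-x) := by
  rw [← exp_mul]
  congr 1
  field_simp

/-- The facilitation-model probabilities `P i t` solve the pure-birth
(Kolmogorov forward) equations with intensities `λ_i(t) = (1 + η i) lam₀(t)`. -/
theorem facilitation_forward_equations
    (η : ℝ) (hη : 0 < η)
    (lam₀ : ℝ → ℝ) (hlam₀ : Continuous lam₀)
    (Λ₀ : ℝ → ℝ) (hΛ₀ : ∀ t, Λ₀ t = ∫ v in (0 : ℝ)..t, lam₀ v)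
    (P : ℕ → ℝ → ℝ)
    (hP : ∀ i t, P i t =
      ((∏ k ∈ Finset.range i, (η⁻¹ + (k : ℝ))) / (Nat.factorial i : ℝ)) *
        (1 - Real.exp (-(η * Λ₀ t))) ^ i * (Real.exp (-(η * Λ₀ t))) ^ (η⁻¹)) :
    P 0 0 = 1 ∧
    (∀ i : ℕ, 1 ≤ i → P i 0 = 0) ∧
    (∀ t : ℝ, HasDerivAt (P 0) (-(lam₀ t) * P 0 t) t) ∧
    (∀ i : ℕ, 1 ≤ i → ∀ t : ℝ,
      HasDerivAt (P i)
        ((1 + η * ((i : ℝ) - 1)) * lam₀ t * P (i - 1) t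
          - (1 + η * (i : ℝ)) * lam₀ t * P i t) t) := by
  have hP' : ∀ i, P i = facilitationProb η i ∘ Λ₀ := fun i => funext fun t => by
    rw [hP, exp_neg_mul_rpow_inv hη.ne']
    rfl
  have hΛ₀_zero : Λ₀ 0 = 0 := by simp [hΛ₀]
  have hΛ₀_deriv : ∀ t, HasDerivAt Λ₀ (lam₀ t) t := fun t => by
    simpa only [← funext hΛ₀] using (hlam₀.integral_hasStrictDerivAt 0 t).hasDerivAt
  refine ⟨?_, fun i hi => ?_, fun t => ?_, fun i hi t => ?_⟩
  · simp [hP', hΛ₀_zero, facilitationProb_zero]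
  · rw [hP', Function.comp_apply, hΛ₀_zero, facilitationProb_apply_zero η (by omega)]
  · rw [hP']
    refine ((hasDerivAt_facilitationProb_zero η (Λ₀ t)).comp t (hΛ₀_deriv t)).congr_deriv ?_
    simp only [Function.comp_apply]
    ring
  · obtain ⟨j, rfl⟩ := Nat.exists_eq_add_of_le' hi
    rw [hP', hP', Nat.add_sub_cancel]
    refine ((hasDerivAt_facilitationProb_succ hη.ne' j (Λ₀ t)).comp t (hΛ₀_deriv t)).congr_deriv ?_
    simp only [Function.comp_apply]
    push_cast
    ring
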